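/- arXiv:1912.03488 — 3 statements merged into one kernel-verified Lean document; each statement's English description precedes it below -/
import Mathlib

section
/- If N is a K×K doubly stochastic invertible matrix such that every row of N has at least two strictly positive entries, then every column of N⁻¹ contains at least one strictly negative entry. -/
open Matrix Finset

theorem inv_doubly_stochastic_col_has_neg_entry
    (K : ℕ) (hK : 2 ≤ K) (N : Matrix (Fin K) (Fin K) ℝ)
    (hnn : ∀ i j, 0 ≤ N i j)
    (hrow : ∀ i, ∑ j, N i j = 1)
    (hcol : ∀ j, ∑ i, N i j = 1)
    (hinv : IsUnit N.det)
    (htwo : ∀ i, ∃ j j' : Fin K, j ≠ j' ∧ 0 < N i j ∧ 0 < N i j') :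
    ∀ k : Fin K, ∃ i : Fin K, N⁻¹ i k < 0 := by
  intro k
  by_contra h
  push_neg at h
  have hNN : N * N⁻¹ = 1 := Matrix.mul_nonsing_inv N hinv
  -- column sum of N⁻¹ at k equals 1
  have hsum : ∑ i, N⁻¹ i k = 1 := by
    have h1 : (fun _ : Fin K => (1:ℝ)) ᵥ* N = (fun _ => 1) := by
      funext j
      simpa [Matrix.vecMul, dotProduct] using hcol j
    have h2 : (fun _ : Fin K => (1:ℝ)) ᵥ* N⁻¹ = (fun _ => 1) := by
      calc (fun _ : Fin K => (1:ℝ)) ᵥ* N⁻¹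
          = ((fun _ : Fin K => (1:ℝ)) ᵥ* N) ᵥ* N⁻¹ := by rw [h1]
        _ = (fun _ : Fin K => (1:ℝ)) ᵥ* (N * N⁻¹) := by rw [Matrix.vecMul_vecMul]
        _ = (fun _ => 1) := by rw [hNN]; simp
    have := congrFun h2 k
    simpa [Matrix.vecMul, dotProduct] using this
  -- some entry of column k of N⁻¹ is positive
  obtain ⟨j0, hj0⟩ : ∃ j, 0 < N⁻¹ j k := by
    by_contra hc
    push_neg at hc
    have : ∑ i, N⁻¹ i k ≤ 0 := Finset.sum_nonpos fun i _ => hc i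
    linarith
  -- for i ≠ k, N i j0 = 0
  have hzero : ∀ i : Fin K, i ≠ k → N i j0 = 0 := by
    intro i hik
    have h0 : ∑ j, N i j * N⁻¹ j k = 0 := by
      have := congrFun (congrFun hNN i) k
      rw [Matrix.mul_apply] at this
      rw [this, Matrix.one_apply_ne hik]
    have hall := (Finset.sum_eq_zero_iff_of_nonneg
      (fun j _ => mul_nonneg (hnn i j) (h j))).mp h0 j0 (Finset.mem_univ j0)
    rcases mul_eq_zero.mp hall with h1 | h1
    · exact h1
    · exact absurd h1 (ne_of_gt hj0)
  -- so N k j0 = 1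
  have hkj0 : N k j0 = 1 := by
    have := hcol j0
    rwa [Finset.sum_eq_single k (fun i _ hik => hzero i hik)
      (fun hk' => absurd (Finset.mem_univ k) hk')] at this
  -- hence all other entries of row k are 0
  have hrowk : ∀ j : Fin K, j ≠ j0 → N k j = 0 := by
    intro j hj
    have hs : ∑ j', N k j' = N k j0 + ∑ j' ∈ Finset.univ.erase j0, N k j' := by
      rw [add_comm, Finset.sum_erase_add _ _ (Finset.mem_univ j0)]
    have h0 : ∑ j' ∈ Finset.univ.erase j0, N k j' = 0 := by
      have := hrow k
      rw [hs, hkj0] at this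
      linarith
    have := (Finset.sum_eq_zero_iff_of_nonneg
      (fun j' _ => hnn k j')).mp h0 j (Finset.mem_erase.mpr ⟨hj, Finset.mem_univ j⟩)
    exact this
  obtain ⟨j1, j2, hne, hp1, hp2⟩ := htwo k
  rcases eq_or_ne j1 j0 with rfl | h1
  · exact absurd (hrowk j2 (fun hh => hne hh.symm)) (ne_of_gt hp2)
  · exact absurd (hrowk j1 h1) (ne_of_gt hp1)
end

section
/- SGD threshold ordering for corrected cross-entropy loss (expected step): with learning rate 0 ≤ α ≤ 4 and current thresholds satisfying b_i ≥ b_{i+1}, the expected updated gap satisfies E_ỹ[b_i^{new} − b_{i+1}^{new}] = (b_i − b_{i+1}) − α(σ(g+b_i) − σ(g+b_{i+1})) + α P(y = i+1) ≥ 0, where the expectation is over the noisy label ỹ whose marginal is q = N^T p. -/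
/-!
Averaging over `ỹ ~ q` with `qᵀ = pᵀ N` uses `∑ q = 1` (the rows of `N` sum to one) and
`qᵀ N⁻¹ = pᵀ N N⁻¹ = pᵀ`, so the corrected term `N⁻¹ ỹ k` averages to `p k`.
Since `σ' = σ (1 - σ) ≤ 1/4`, the sigmoid is monotone and `1/4`-Lipschitz, hence for `α ≤ 4`
the step `α (σ (g + bᵢ) - σ (g + bᵢ₊₁))` lies between `0` and `bᵢ - bᵢ₊₁`, while `α p k ≥ 0`.
-/

open Matrix Finset

noncomputable def sigmoid (a : ℝ) : ℝ := 1 / (1 + Real.exp (-a))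

lemma sigmoid_eq_real_sigmoid : sigmoid = Real.sigmoid := by
  funext x
  rw [sigmoid, Real.sigmoid_def, one_div]

lemma Real.sigmoid_mul_one_sub_sigmoid_le (x : ℝ) :
    Real.sigmoid x * (1 - Real.sigmoid x) ≤ 1 / 4 := by
  nlinarith [sq_nonneg (Real.sigmoid x - 1 / 2)]

lemma Real.sigmoid_sub_sigmoid_le {a b : ℝ} (h : b ≤ a) :
    Real.sigmoid a - Real.sigmoid b ≤ (a - b) / 4 := by
  have := image_sub_le_mul_sub_of_deriv_le differentiable_sigmoid
    (fun x => by rw [deriv_sigmoid]; exact Real.sigmoid_mul_one_sub_sigmoid_le x) h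
  linarith

lemma sub_sub_mul_sigmoid_sub_nonneg {a b α : ℝ} (g : ℝ) (hba : b ≤ a) (hα0 : 0 ≤ α)
    (hα4 : α ≤ 4) :
    0 ≤ (a - b) - α * (sigmoid (g + a) - sigmoid (g + b)) := by
  rw [sigmoid_eq_real_sigmoid]
  have hshift : g + b ≤ g + a := add_le_add_right hba g
  have hlip := Real.sigmoid_sub_sigmoid_le hshift
  rw [add_sub_add_left_eq_sub] at hlip
  have hmono := sub_nonneg.2 (Real.sigmoid_le hshift)
  nlinarith

namespace Matrix

variable {n R : Type*} [Fintype n]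

lemma sum_vecMul_of_sum_row_eq_one [Semiring R] {M : Matrix n n R}
    (hM : ∀ i, ∑ j, M i j = 1) (x : n → R) : ∑ j, (x ᵥ* M) j = ∑ i, x i := by
  have hM1 : M *ᵥ 1 = 1 := funext fun i => by simpa [mulVec, dotProduct] using hM i
  rw [← dotProduct_one, ← dotProduct_mulVec, hM1, dotProduct_one]

lemma vecMul_vecMul_nonsing_inv [DecidableEq n] [CommRing R] {M : Matrix n n R}
    (hM : IsUnit M.det) (x : n → R) : x ᵥ* M ᵥ* M⁻¹ = x := by
  rw [vecMul_vecMul, mul_nonsing_inv M hM, vecMul_one]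

end Matrix

lemma Finset.sum_mul_const_add_mul {ι R : Type*} [CommSemiring R] (s : Finset ι) (q w : ι → R)
    (c α : R) :
    ∑ m ∈ s, q m * (c + α * w m) = (∑ m ∈ s, q m) * c + α * ∑ m ∈ s, q m * w m := by
  simp only [mul_add, sum_add_distrib, sum_mul, mul_sum, mul_left_comm]

theorem sgd_ce_expected_gap_nonneg_general
    (K : ℕ) (N : Matrix (Fin K) (Fin K) ℝ)
    (hinv : IsUnit N.det)
    (hrow : ∀ y, ∑ j, N y j = 1)
    (p : Fin K → ℝ) (hp_nn : ∀ j, 0 ≤ p j) (hp_sum : ∑ j, p j = 1)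
    (q : Fin K → ℝ) (hq : ∀ m, q m = ∑ j, p j * N j m)
    (g bi bi1 α : ℝ) (hb : bi1 ≤ bi) (hα0 : 0 ≤ α) (hα4 : α ≤ 4)
    (k : Fin K) :
    (∑ m, q m * ((bi - bi1) - α * (sigmoid (g + bi) - sigmoid (g + bi1))
        + α * N⁻¹ m k)
      = (bi - bi1) - α * (sigmoid (g + bi) - sigmoid (g + bi1)) + α * p k) ∧
    0 ≤ (bi - bi1) - α * (sigmoid (g + bi) - sigmoid (g + bi1)) + α * p k := by
  obtain rfl : q = p ᵥ* N := funext hq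
  have hq_sum : ∑ m, (p ᵥ* N) m = 1 := by rw [sum_vecMul_of_sum_row_eq_one hrow, hp_sum]
  have hq_corrected : ∑ m, (p ᵥ* N) m * N⁻¹ m k = p k :=
    congrFun (vecMul_vecMul_nonsing_inv hinv p) k
  refine ⟨by rw [sum_mul_const_add_mul, hq_sum, hq_corrected, one_mul], ?_⟩
  have hdescent := sub_sub_mul_sigmoid_sub_nonneg g hb hα0 hα4
  have hcorrection := mul_nonneg hα0 (hp_nn k)
  linarith

theorem sgd_ce_expected_gap_nonneg
    (K : ℕ) (N : Matrix (Fin K) (Fin K) ℝ)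
    (hinv : IsUnit N.det)
    (hnn : ∀ y j, 0 ≤ N y j)
    (hrow : ∀ y, ∑ j, N y j = 1)
    (p : Fin K → ℝ) (hp_nn : ∀ j, 0 ≤ p j) (hp_sum : ∑ j, p j = 1)
    (q : Fin K → ℝ) (hq : ∀ m, q m = ∑ j, p j * N j m)
    (g bi bi1 α : ℝ) (hb : bi1 ≤ bi) (hα0 : 0 ≤ α) (hα4 : α ≤ 4)
    (k : Fin K) :
    (∑ m, q m * ((bi - bi1) - α * (sigmoid (g + bi) - sigmoid (g + bi1))
        + α * N⁻¹ m k)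
      = (bi - bi1) - α * (sigmoid (g + bi) - sigmoid (g + bi1)) + α * p k) ∧
    0 ≤ (bi - bi1) - α * (sigmoid (g + bi) - sigmoid (g + bi1)) + α * p k :=
  sgd_ce_expected_gap_nonneg_general K N hinv hrow p hp_nn hp_sum q hq g bi bi1 α hb hα0 hα4 k
end

section
/- MAE decomposition: for the ordinal prediction rule f(x) = 1 + ∑_{k=1}^{K−1} 𝟙[g(x)+b_k > 0] with decreasing thresholds b_1 ≥ … ≥ b_{K−1}, and true label y, the loss l_MAE(g(x),b,y) = ∑_{i=1}^{y−1} 𝟙[g(x)+b_i < 0] + ∑_{i=y}^{K−1} 𝟙[g(x)+b_i ≥ 0] equals |f(x) − y| provided g(x)+b_k ≠ 0 for all k. -/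
open Finset

theorem mae_decomposition
    (K : ℕ) (hK : 2 ≤ K) (gx : ℝ) (b : Fin (K - 1) → ℝ)
    (hmono : ∀ i j : Fin (K - 1), i ≤ j → b j ≤ b i)
    (y : ℕ) (hy1 : 1 ≤ y) (hy2 : y ≤ K)
    (hne : ∀ k : Fin (K - 1), gx + b k ≠ 0) :
    ((Finset.univ.filter (fun i : Fin (K - 1) => (i : ℕ) + 1 < y ∧ gx + b i < 0)).card
        + (Finset.univ.filter (fun i : Fin (K - 1) => y ≤ (i : ℕ) + 1 ∧ 0 ≤ gx + b i)).card
        : ℤ)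
      = |(1 + ((Finset.univ.filter (fun k : Fin (K - 1) => 0 < gx + b k)).card : ℤ))
          - (y : ℤ)| := by
  set m := (Finset.univ.filter (fun k : Fin (K - 1) => 0 < gx + b k)).card with hm
  have hmn : m ≤ K - 1 := by
    calc m ≤ (Finset.univ : Finset (Fin (K - 1))).card :=
      Finset.card_le_card (Finset.filter_subset _ _)
    _ = K - 1 := by simp
  have claim : ∀ i : Fin (K - 1), (0 < gx + b i ↔ (i : ℕ) < m) := by
    intro i
    constructor
    · intro hi
      have hsub : Finset.Iic i ⊆ Finset.univ.filter (fun k : Fin (K - 1) => 0 < gx + b k) := by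
        intro j hj
        simp only [Finset.mem_Iic] at hj
        simp only [Finset.mem_filter, Finset.mem_univ, true_and]
        calc (0:ℝ) < gx + b i := hi
        _ ≤ gx + b j := by have := hmono j i hj; linarith
      have := Finset.card_le_card hsub
      rw [Fin.card_Iic] at this
      omega
    · intro hi
      by_contra hneg
      have hlt : gx + b i < 0 := lt_of_le_of_ne (not_lt.mp hneg) (hne i)
      have hsub : Finset.univ.filter (fun k : Fin (K - 1) => 0 < gx + b k) ⊆ Finset.Iio i := by
        intro j hj
        simp only [Finset.mem_filter, Finset.mem_univ, true_and] at hj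
        simp only [Finset.mem_Iio]
        by_contra hji
        have := hmono i j (not_lt.mp hji)
        linarith
      have := Finset.card_le_card hsub
      rw [Fin.card_Iio] at this
      omega
  have transfer : ∀ (p : ℕ → Prop) [DecidablePred p],
      (Finset.univ.filter (fun i : Fin (K - 1) => p i.val)).card
        = ((Finset.range (K - 1)).filter p).card := by
    intro p _
    rw [Finset.card_filter, Finset.card_filter,
      Fin.sum_univ_eq_sum_range (fun j => if p j then 1 else 0) (K - 1)]
  have hA : (Finset.univ.filter (fun i : Fin (K - 1) => (i : ℕ) + 1 < y ∧ gx + b i < 0)).card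
      = (y - 1) - m := by
    have he : (Finset.univ.filter (fun i : Fin (K - 1) => (i : ℕ) + 1 < y ∧ gx + b i < 0))
        = (Finset.univ.filter (fun i : Fin (K - 1) => (i : ℕ) + 1 < y ∧ ¬ ((i : ℕ) < m))) := by
      apply Finset.filter_congr
      intro i _
      have h1 := claim i
      constructor
      · rintro ⟨h, h'⟩; exact ⟨h, fun hc => by have := h1.mpr hc; linarith⟩
      · rintro ⟨h, h'⟩
        refine ⟨h, lt_of_le_of_ne ?_ (hne i)⟩
        by_contra hc
        exact h' (h1.mp (by push_neg at hc; exact hc))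
    rw [he, transfer (fun i => i + 1 < y ∧ ¬ (i < m))]
    have he2 : (Finset.range (K - 1)).filter (fun i => i + 1 < y ∧ ¬ (i < m))
        = Finset.Ico m (y - 1) := by
      ext i
      simp only [Finset.mem_filter, Finset.mem_range, Finset.mem_Ico]
      omega
    rw [he2, Nat.card_Ico]
  have hB : (Finset.univ.filter (fun i : Fin (K - 1) => y ≤ (i : ℕ) + 1 ∧ 0 ≤ gx + b i)).card
      = m - (y - 1) := by
    have he : (Finset.univ.filter (fun i : Fin (K - 1) => y ≤ (i : ℕ) + 1 ∧ 0 ≤ gx + b i))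
        = (Finset.univ.filter (fun i : Fin (K - 1) => y ≤ (i : ℕ) + 1 ∧ (i : ℕ) < m)) := by
      apply Finset.filter_congr
      intro i _
      have h1 := claim i
      constructor
      · rintro ⟨h, h'⟩; exact ⟨h, h1.mp (lt_of_le_of_ne h' (Ne.symm (hne i)))⟩
      · rintro ⟨h, h'⟩; exact ⟨h, le_of_lt (h1.mpr h')⟩
    rw [he, transfer (fun i => y ≤ i + 1 ∧ i < m)]
    have he2 : (Finset.range (K - 1)).filter (fun i => y ≤ i + 1 ∧ i < m)
        = Finset.Ico (y - 1) m := by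
      ext i
      simp only [Finset.mem_filter, Finset.mem_range, Finset.mem_Ico]
      omega
    rw [he2, Nat.card_Ico]
  rw [hA, hB]
  rcases le_total (1 + (m : ℤ)) (y : ℤ) with h | h
  · rw [abs_of_nonpos (by linarith)]
    omega
  · rw [abs_of_nonneg (by linarith)]
    omega
end
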